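/- Let q ≥ 2, t > 0. The series ∑_{j=1}^∞ q^{-(r+2j)/2} I_{r+2j}(2√q t) converges for every integer r ≥ 0, and moreover the double series ∑_{n≥0} ∑_{j≥0} (q+1)q^{n−1} · q^{-(n+2j)/2} I_{n+2j}(2√q t) converges absolutely. -/
import Mathlib


/-- Modified Bessel function of the first kind of integer order `m ≥ 0`,
defined by its power series. -/
noncomputable def besselI (m : ℕ) (t : ℝ) : ℝ :=
  ∑' k : ℕ, (t / 2) ^ (2 * k + m) / (k.factorial * (k + m).factorial)

lemma besselI_nonneg (m : ℕ) {t : ℝ} (ht : 0 ≤ t) : 0 ≤ besselI m t := by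
  refine tsum_nonneg fun k => ?_
  positivity

lemma besselI_le (m : ℕ) {t : ℝ} (ht : 0 ≤ t) :
    besselI m t ≤ (t / 2) ^ m / m.factorial * ∑' k : ℕ, ((t / 2) ^ 2) ^ k / k.factorial := by
  have ht2 : (0:ℝ) ≤ t / 2 := by linarith
  have hg : Summable (fun k : ℕ => (t / 2) ^ m / m.factorial * (((t / 2) ^ 2) ^ k / k.factorial)) :=
    (Real.summable_pow_div_factorial ((t / 2) ^ 2)).mul_left _
  have hle : ∀ k : ℕ, (t / 2) ^ (2 * k + m) / (k.factorial * (k + m).factorial)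
      ≤ (t / 2) ^ m / m.factorial * (((t / 2) ^ 2) ^ k / k.factorial) := by
    intro k
    have h1 : (t / 2) ^ (2 * k + m) = (t / 2) ^ m * ((t / 2) ^ 2) ^ k := by
      rw [pow_add, pow_mul, mul_comm]
    rw [h1]
    have hfac : (m.factorial * k.factorial : ℝ) ≤ (k.factorial * (k + m).factorial : ℝ) := by
      have : m.factorial ≤ (k + m).factorial :=
        Nat.factorial_le (Nat.le_add_left m k)
      calc (m.factorial * k.factorial : ℝ) = (k.factorial : ℝ) * m.factorial := by ring
        _ ≤ (k.factorial : ℝ) * (k + m).factorial := by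
            exact mul_le_mul_of_nonneg_left (by exact_mod_cast this) (by positivity)
    have hnum : (0:ℝ) ≤ (t / 2) ^ m * ((t / 2) ^ 2) ^ k := by positivity
    have h2 : (t / 2) ^ m * ((t / 2) ^ 2) ^ k / (k.factorial * (k + m).factorial)
        ≤ (t / 2) ^ m * ((t / 2) ^ 2) ^ k / (m.factorial * k.factorial) := by
      apply div_le_div_of_nonneg_left hnum (by positivity) hfac
    refine h2.trans_eq ?_
    rw [mul_div_mul_comm]
  have hf : Summable (fun k : ℕ =>
      (t / 2) ^ (2 * k + m) / (k.factorial * (k + m).factorial)) := by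
    refine Summable.of_nonneg_of_le (fun k => by positivity) hle hg
  calc besselI m t ≤ ∑' k : ℕ, (t / 2) ^ m / m.factorial * (((t / 2) ^ 2) ^ k / k.factorial) :=
        Summable.tsum_le_tsum hle hf hg
    _ = (t / 2) ^ m / m.factorial * ∑' k : ℕ, ((t / 2) ^ 2) ^ k / k.factorial := tsum_mul_left

theorem heat_kernel_series_convergence (q : ℕ) (hq : 2 ≤ q) (t : ℝ) (ht : 0 < t) :
    (∀ r : ℕ, Summable (fun j : ℕ =>
      (q : ℝ) ^ (-((r : ℝ) + 2 * ((j : ℝ) + 1)) / 2) *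
        besselI (r + 2 * (j + 1)) (2 * Real.sqrt q * t))) ∧
    Summable (fun p : ℕ × ℕ =>
      ((q : ℝ) + 1) * (q : ℝ) ^ ((p.1 : ℝ) - 1) *
        ((q : ℝ) ^ (-((p.1 : ℝ) + 2 * (p.2 : ℝ)) / 2) *
          besselI (p.1 + 2 * p.2) (2 * Real.sqrt q * t))) := by
  have hq0 : (0:ℝ) < q := by positivity
  have hs : (0:ℝ) ≤ 2 * Real.sqrt q * t := by positivity
  set s : ℝ := 2 * Real.sqrt q * t with hs_def
  have hs2 : s / 2 = Real.sqrt q * t := by rw [hs_def]; ring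
  set E : ℝ := ∑' k : ℕ, ((s / 2) ^ 2) ^ k / k.factorial with hE
  have hE0 : 0 ≤ E := tsum_nonneg fun k => by positivity
  -- key pointwise bound: q^{-m/2} * besselI m s ≤ t^m/m! * E
  have key : ∀ m : ℕ, (q : ℝ) ^ (-(m : ℝ) / 2) * besselI m s ≤ t ^ m / m.factorial * E := by
    intro m
    have h1 : besselI m s ≤ (s / 2) ^ m / m.factorial * E := besselI_le m hs
    have hpow : (q : ℝ) ^ (-(m : ℝ) / 2) * (s / 2) ^ m = t ^ m := by
      rw [hs2, mul_pow]
      have hsqrt : Real.sqrt q ^ m = (q : ℝ) ^ ((m : ℝ) / 2) := by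
        rw [Real.sqrt_eq_rpow, ← Real.rpow_natCast ((q:ℝ) ^ ((1:ℝ)/2)) m,
          ← Real.rpow_mul hq0.le]
        ring_nf
      rw [hsqrt, ← mul_assoc, ← Real.rpow_add hq0,
        show -(m:ℝ)/2 + (m:ℝ)/2 = 0 by ring, Real.rpow_zero, one_mul]
    calc (q : ℝ) ^ (-(m : ℝ) / 2) * besselI m s
        ≤ (q : ℝ) ^ (-(m : ℝ) / 2) * ((s / 2) ^ m / m.factorial * E) := by
          exact mul_le_mul_of_nonneg_left h1 (Real.rpow_nonneg hq0.le _)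
      _ = (q : ℝ) ^ (-(m : ℝ) / 2) * (s / 2) ^ m / m.factorial * E := by ring
      _ = t ^ m / m.factorial * E := by rw [hpow]
  have keynn : ∀ m : ℕ, 0 ≤ (q : ℝ) ^ (-(m : ℝ) / 2) * besselI m s :=
    fun m => mul_nonneg (Real.rpow_nonneg hq0.le _) (besselI_nonneg m hs)
  -- the double sum
  have h2 : Summable (fun p : ℕ × ℕ =>
      ((q : ℝ) + 1) * (q : ℝ) ^ ((p.1 : ℝ) - 1) *
        ((q : ℝ) ^ (-((p.1 : ℝ) + 2 * (p.2 : ℝ)) / 2) *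
          besselI (p.1 + 2 * p.2) s)) := by
    have hsum1 : Summable (fun n : ℕ => ((q:ℝ) * t) ^ n / n.factorial) :=
      Real.summable_pow_div_factorial _
    have hsum2 : Summable (fun j : ℕ => (t ^ 2) ^ j / j.factorial) :=
      Real.summable_pow_div_factorial _
    have hprod : Summable (fun p : ℕ × ℕ =>
        (((q:ℝ) * t) ^ p.1 / p.1.factorial) * ((t ^ 2) ^ p.2 / p.2.factorial)) :=
      hsum1.mul_of_nonneg hsum2 (fun n => by positivity) (fun j => by positivity)
    refine Summable.of_nonneg_of_le (fun p => ?_) (fun p => ?_)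
      (hprod.mul_left (((q:ℝ) + 1) / q * E))
    · have := keynn (p.1 + 2 * p.2)
      have h := besselI_nonneg (p.1 + 2 * p.2) hs
      have : (0:ℝ) ≤ (q : ℝ) ^ (-((p.1 : ℝ) + 2 * (p.2 : ℝ)) / 2) := Real.rpow_nonneg hq0.le _
      positivity
    · obtain ⟨n, j⟩ := p
      have hcast : (-(((n + 2 * j : ℕ)) : ℝ) / 2) = (-((n : ℝ) + 2 * (j : ℝ)) / 2) := by
        push_cast; ring
      have hk := key (n + 2 * j)
      rw [hcast] at hk
      have hrp : (q : ℝ) ^ ((n : ℝ) - 1) = (q:ℝ) ^ n / q := by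
        rw [show ((n:ℝ) - 1) = (n:ℝ) + (-1) by ring, Real.rpow_add hq0,
          Real.rpow_natCast, Real.rpow_neg_one]
        ring
      have hfac : (n.factorial * (2*j).factorial : ℝ) ≤ ((n + 2*j).factorial : ℝ) := by
        exact_mod_cast Nat.le_of_dvd (Nat.factorial_pos _)
          (Nat.factorial_mul_factorial_dvd_factorial_add n (2*j))
      have htpow : t ^ (n + 2*j) / ((n + 2*j).factorial : ℝ)
          ≤ t ^ n / n.factorial * ((t^2) ^ j / (2*j).factorial) := by
        have h1 : t ^ (n + 2*j) = t ^ n * (t^2) ^ j := by rw [← pow_mul, ← pow_add]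
        rw [h1]
        rw [div_mul_div_comm]
        apply div_le_div_of_nonneg_left (by positivity) (by positivity) hfac
      have hbnd : (q : ℝ) ^ (-((n : ℝ) + 2 * (j : ℝ)) / 2) * besselI (n + 2 * j) s
          ≤ t ^ n / n.factorial * ((t^2) ^ j / (2*j).factorial) * E := by
        refine hk.trans ?_
        exact mul_le_mul_of_nonneg_right htpow hE0
      have h2j : ((2*j).factorial : ℝ) ≥ (j.factorial : ℝ) := by
        exact_mod_cast Nat.factorial_le (by omega)
      have htj : (t^2) ^ j / ((2*j).factorial : ℝ) ≤ (t^2) ^ j / (j.factorial : ℝ) :=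
        div_le_div_of_nonneg_left (by positivity) (by positivity) h2j
      calc ((q : ℝ) + 1) * (q : ℝ) ^ ((n : ℝ) - 1) *
            ((q : ℝ) ^ (-((n : ℝ) + 2 * (j : ℝ)) / 2) * besselI (n + 2 * j) s)
          ≤ ((q : ℝ) + 1) * (q : ℝ) ^ ((n : ℝ) - 1) *
            (t ^ n / n.factorial * ((t^2) ^ j / (2*j).factorial) * E) := by
            refine mul_le_mul_of_nonneg_left hbnd ?_
            have : (0:ℝ) ≤ (q:ℝ) ^ ((n:ℝ) - 1) := Real.rpow_nonneg hq0.le _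
            positivity
        _ ≤ ((q : ℝ) + 1) * (q : ℝ) ^ ((n : ℝ) - 1) *
            (t ^ n / n.factorial * ((t^2) ^ j / j.factorial) * E) := by
            refine mul_le_mul_of_nonneg_left ?_ ?_
            · refine mul_le_mul_of_nonneg_right
                (mul_le_mul_of_nonneg_left htj (by positivity)) hE0
            · have : (0:ℝ) ≤ (q:ℝ) ^ ((n:ℝ) - 1) := Real.rpow_nonneg hq0.le _
              positivity
        _ = ((q:ℝ) + 1) / q * E * ((((q:ℝ) * t) ^ n / n.factorial) * ((t ^ 2) ^ j / j.factorial)) := by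
            rw [hrp, mul_pow]
            field_simp
  constructor
  · intro r
    have hrsum : Summable (fun j : ℕ =>
        ((q : ℝ) + 1) * (q : ℝ) ^ ((r : ℝ) - 1) *
          ((q : ℝ) ^ (-((r : ℝ) + 2 * ((j+1 : ℕ) : ℝ)) / 2) *
            besselI (r + 2 * (j+1)) s)) := by
      have hinj : Function.Injective (fun j : ℕ => ((r, j+1) : ℕ × ℕ)) := by
        intro a b hab
        simpa using hab
      exact (h2.comp_injective hinj).congr (fun j => rfl)
    have hc : (0:ℝ) < ((q : ℝ) + 1) * (q : ℝ) ^ ((r : ℝ) - 1) := by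
      have : (0:ℝ) < (q:ℝ) ^ ((r:ℝ) - 1) := Real.rpow_pos_of_pos hq0 _
      positivity
    have := hrsum.mul_left (((q : ℝ) + 1) * (q : ℝ) ^ ((r : ℝ) - 1))⁻¹
    refine this.congr (fun j => ?_)
    push_cast
    field_simp
  · exact h2
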